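/- arXiv:1807.02067 — 2 statements merged into one kernel-verified Lean document; each statement's English description precedes it below -/
import Mathlib

section
/- Let the sequences {W^k}, {y^k}, {Z^k}, {X^k} be generated by Algorithm 1, and for each k ≥ 0 define U^k := X^k − σ(φ(X^k) + C − A*(y^{k+1})). Then for every k ≥ 0 one has U^{k+1} = T(U^k), where T(U) = U − Π_{S^n_+}(U) + Π_K(2Π_{S^n_+}(U) − U − σ(φ(Π_{S^n_+}(U)) + C)). -/
open scoped Matrix

/-- The trace inner product `⟨X, Y⟩ = tr(Xᵀ Y)` on `n × n` real matrices
(the Frobenius inner product; for symmetric matrices this is `tr(X Y)`). -/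
noncomputable def finner {n : ℕ} (X Y : Matrix (Fin n) (Fin n) ℝ) : ℝ :=
  (Xᵀ * Y).trace

/-- The squared Frobenius norm `‖X‖² = tr(Xᵀ X)`. -/
noncomputable def frobSq {n : ℕ} (X : Matrix (Fin n) (Fin n) ℝ) : ℝ :=
  (Xᵀ * X).trace

/-- The (finite part of the) augmented Lagrangian of the dual CQSDP problem:
`L_σ(W, y, Z; X) = ½⟨W, φ W⟩ − bᵀ y + ⟨−φ W + A* y + Z − C, X⟩ + (σ/2)‖−φ W + A* y + Z − C‖²`
(the indicator term `δ_{S₊ⁿ}(Z)` is accounted for by positive-semidefiniteness constraints). -/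
noncomputable def augLag {n m : ℕ}
    (φ : Matrix (Fin n) (Fin n) ℝ →ₗ[ℝ] Matrix (Fin n) (Fin n) ℝ)
    (Astar : (Fin m → ℝ) →ₗ[ℝ] Matrix (Fin n) (Fin n) ℝ)
    (C : Matrix (Fin n) (Fin n) ℝ) (b : Fin m → ℝ) (σ : ℝ)
    (W : Matrix (Fin n) (Fin n) ℝ) (y : Fin m → ℝ)
    (Z : Matrix (Fin n) (Fin n) ℝ) (X : Matrix (Fin n) (Fin n) ℝ) : ℝ :=
  1 / 2 * finner W (φ W) - b ⬝ᵥ y + finner (-(φ W) + Astar y + Z - C) X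
    + σ / 2 * frobSq (-(φ W) + Astar y + Z - C)

section Aux
variable {n : ℕ}

private lemma finner_comm (X Y : Matrix (Fin n) (Fin n) ℝ) : finner X Y = finner Y X := by
  unfold finner
  rw [← Matrix.trace_transpose, Matrix.transpose_mul, Matrix.transpose_transpose]

private lemma finner_add_right (X A B : Matrix (Fin n) (Fin n) ℝ) :
    finner X (A + B) = finner X A + finner X B := by
  simp [finner, Matrix.mul_add]

private lemma finner_add_left (A B X : Matrix (Fin n) (Fin n) ℝ) :
    finner (A + B) X = finner A X + finner B X := by
  simp [finner, Matrix.transpose_add, Matrix.add_mul]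

private lemma finner_smul_right (c : ℝ) (X A : Matrix (Fin n) (Fin n) ℝ) :
    finner X (c • A) = c * finner X A := by
  simp [finner, Matrix.mul_smul]

private lemma finner_smul_left (c : ℝ) (A X : Matrix (Fin n) (Fin n) ℝ) :
    finner (c • A) X = c * finner A X := by
  simp [finner, Matrix.transpose_smul, Matrix.smul_mul]

private lemma finner_neg_right (X A : Matrix (Fin n) (Fin n) ℝ) :
    finner X (-A) = -finner X A := by
  simp [finner, Matrix.mul_neg]

private lemma finner_neg_left (A X : Matrix (Fin n) (Fin n) ℝ) :
    finner (-A) X = -finner A X := by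
  simp [finner, Matrix.transpose_neg, Matrix.neg_mul]

private lemma finner_sub_right (X A B : Matrix (Fin n) (Fin n) ℝ) :
    finner X (A - B) = finner X A - finner X B := by
  simp [finner, Matrix.mul_sub]

private lemma finner_sub_left (A B X : Matrix (Fin n) (Fin n) ℝ) :
    finner (A - B) X = finner A X - finner B X := by
  simp [finner, Matrix.transpose_sub, Matrix.sub_mul]

private lemma frobSq_eq_finner (X : Matrix (Fin n) (Fin n) ℝ) : frobSq X = finner X X := rfl

private lemma frobSq_add (A B : Matrix (Fin n) (Fin n) ℝ) :
    frobSq (A + B) = frobSq A + 2 * finner A B + frobSq B := by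
  rw [frobSq_eq_finner, finner_add_left, finner_add_right, finner_add_right, finner_comm B A,
    frobSq_eq_finner, frobSq_eq_finner]
  ring

private lemma frobSq_smul (c : ℝ) (X : Matrix (Fin n) (Fin n) ℝ) :
    frobSq (c • X) = c ^ 2 * frobSq X := by
  rw [frobSq_eq_finner, finner_smul_left, finner_smul_right, frobSq_eq_finner]
  ring

private lemma frobSq_neg (X : Matrix (Fin n) (Fin n) ℝ) : frobSq (-X) = frobSq X := by
  rw [show -X = (-1 : ℝ) • X by module, frobSq_smul]
  ring

private lemma frobSq_sum_sq (X : Matrix (Fin n) (Fin n) ℝ) :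
    frobSq X = ∑ i, ∑ j, (X j i) ^ 2 := by
  simp [frobSq, Matrix.trace, Matrix.mul_apply, Matrix.diag, sq]

private lemma frobSq_nonneg (X : Matrix (Fin n) (Fin n) ℝ) : 0 ≤ frobSq X := by
  rw [frobSq_sum_sq]
  positivity

private lemma frobSq_eq_zero {X : Matrix (Fin n) (Fin n) ℝ} (h : frobSq X ≤ 0) : X = 0 := by
  have h0 := frobSq_nonneg X
  have h1 : frobSq X = 0 := le_antisymm h h0
  rw [frobSq_sum_sq] at h1
  have hz := (Finset.sum_eq_zero_iff_of_nonneg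
    (fun i _ => Finset.sum_nonneg fun j _ => sq_nonneg _)).mp h1
  ext j i
  have := (Finset.sum_eq_zero_iff_of_nonneg (fun j _ => sq_nonneg _)).mp
    (hz i (Finset.mem_univ _)) j (Finset.mem_univ _)
  simpa using sq_eq_zero_iff.mp this

private lemma isSymm_of_herm {M : Matrix (Fin n) (Fin n) ℝ} (h : M.IsHermitian) : M.IsSymm := by
  rw [Matrix.IsSymm, ← Matrix.conjTranspose_eq_transpose_of_trivial]
  exact h

private lemma herm_of_isSymm {M : Matrix (Fin n) (Fin n) ℝ} (h : M.IsSymm) : M.IsHermitian := by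
  rw [Matrix.IsHermitian, Matrix.conjTranspose_eq_transpose_of_trivial]
  exact h

private lemma psd_smul {c : ℝ} {M : Matrix (Fin n) (Fin n) ℝ} (hc : 0 ≤ c)
    (hM : M.PosSemidef) : (c • M).PosSemidef := by
  refine .of_dotProduct_mulVec_nonneg (herm_of_isSymm ((isSymm_of_herm hM.1).smul c)) fun x => ?_
  have h2 := hM.dotProduct_mulVec_nonneg x
  rw [Matrix.smul_mulVec, dotProduct_smul, smul_eq_mul]
  exact mul_nonneg hc h2

private lemma trace_nonneg_of_psd {M : Matrix (Fin n) (Fin n) ℝ} (hM : M.PosSemidef) :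
    0 ≤ M.trace := by
  rw [Matrix.trace]
  apply Finset.sum_nonneg
  intro i _
  have h := hM.dotProduct_mulVec_nonneg (Pi.single i 1)
  simpa [Matrix.mulVec, dotProduct, Pi.single_apply] using h

open scoped MatrixOrder in
private lemma finner_psd_nonneg {P V : Matrix (Fin n) (Fin n) ℝ}
    (hP : P.PosSemidef) (hV : V.PosSemidef) : 0 ≤ finner P V := by
  have hPs : Pᵀ = P := isSymm_of_herm hP.1
  unfold finner
  rw [hPs, ← CFC.sqrt_mul_sqrt_self P hP.nonneg, Matrix.mul_assoc, Matrix.trace_mul_comm]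
  have key : ((CFC.sqrt P)ᴴ * V * CFC.sqrt P).PosSemidef := hV.conjTranspose_mul_mul_same _
  rw [(Matrix.nonneg_iff_posSemidef.mp (CFC.sqrt_nonneg P)).1] at key
  exact trace_nonneg_of_psd key

private lemma psd_of_dual {S : Matrix (Fin n) (Fin n) ℝ} (hS : S.IsSymm)
    (h : ∀ V : Matrix (Fin n) (Fin n) ℝ, V.PosSemidef → 0 ≤ finner S V) : S.PosSemidef := by
  refine .of_dotProduct_mulVec_nonneg (herm_of_isSymm hS) fun x => ?_
  have hV : (Matrix.vecMulVec x x).PosSemidef := by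
    have h0 := Matrix.posSemidef_self_mul_conjTranspose (Matrix.replicateCol (Fin 1) x)
    rw [Matrix.vecMulVec_eq (ι := Fin 1)]
    rwa [Matrix.conjTranspose_replicateCol, star_trivial] at h0
  have hfin : finner S (Matrix.vecMulVec x x) = x ⬝ᵥ S *ᵥ x := by
    simp only [finner, Matrix.trace, Matrix.diag, Matrix.mul_apply, Matrix.transpose_apply,
      Matrix.vecMulVec_apply, dotProduct, Matrix.mulVec]
    rw [Finset.sum_comm]
    refine Finset.sum_congr rfl fun j _ => ?_
    rw [Finset.mul_sum]
    exact Finset.sum_congr rfl fun i _ => by ring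
  have := h _ hV
  rw [hfin] at this
  simpa using this

private lemma linear_coeff_zero {a c : ℝ} (ha : 0 ≤ a)
    (h : ∀ t : ℝ, 0 ≤ a * t ^ 2 + c * t) : c = 0 := by
  have hA : (0:ℝ) < a + 1 := by linarith
  set x := c / (a + 1) with hx
  have ht : c = x * (a + 1) := (div_mul_cancel₀ c hA.ne').symm
  have h1 := h (-x)
  have hcx : c * x = x ^ 2 * a + x ^ 2 := by rw [ht]; ring
  have h2 : x ^ 2 ≤ 0 := by nlinarith [h1, hcx]
  have h4 : x = 0 := pow_eq_zero_iff two_ne_zero |>.mp (le_antisymm h2 (sq_nonneg x))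
  rw [ht, h4, zero_mul]

private lemma nonneg_coeff {a c : ℝ} (ha : 0 ≤ a)
    (h : ∀ t : ℝ, 0 < t → t ≤ 1 → 0 ≤ a * t ^ 2 + c * t) : 0 ≤ c := by
  by_contra hc
  push_neg at hc
  have hA : (0:ℝ) < a + 1 := by linarith
  have hx : 0 < -c / (a + 1) := div_pos (by linarith) hA
  set t := min 1 (-c / (a + 1)) with htdef
  have ht0 : 0 < t := lt_min one_pos hx
  have ht1 : t ≤ 1 := min_le_left _ _
  have ht2 : t ≤ -c / (a + 1) := min_le_right _ _
  have key := h t ht0 ht1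
  have h5 : t * (a + 1) ≤ -c := (le_div_iff₀ hA).mp ht2
  nlinarith [mul_pos ht0 ht0, mul_le_mul_of_nonneg_right h5 ht0.le, key]

end Aux

section Shift
variable {n m : ℕ} (φ : Matrix (Fin n) (Fin n) ℝ →ₗ[ℝ] Matrix (Fin n) (Fin n) ℝ)
  (Astar : (Fin m → ℝ) →ₗ[ℝ] Matrix (Fin n) (Fin n) ℝ)
  (C : Matrix (Fin n) (Fin n) ℝ) (b : Fin m → ℝ) (σ : ℝ)

private lemma augLag_y_shift (W : Matrix (Fin n) (Fin n) ℝ) (y : Fin m → ℝ)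
    (Z Xm : Matrix (Fin n) (Fin n) ℝ) (e : Fin m → ℝ) (t : ℝ) :
    augLag φ Astar C b σ W (y + t • e) Z Xm
      = augLag φ Astar C b σ W y Z Xm
        + t * (-(b ⬝ᵥ e) + finner (Astar e) Xm
            + σ * finner (-(φ W) + Astar y + Z - C) (Astar e))
        + t ^ 2 * (σ / 2 * frobSq (Astar e)) := by
  unfold augLag
  have h1 : -(φ W) + Astar (y + t • e) + Z - C
      = (-(φ W) + Astar y + Z - C) + t • Astar e := by
    rw [map_add, map_smul]; abel
  rw [h1, frobSq_add, frobSq_smul, finner_add_left, finner_smul_left, finner_smul_right,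
    dotProduct_add, dotProduct_smul, smul_eq_mul]
  ring

private lemma augLag_Z_shift (W : Matrix (Fin n) (Fin n) ℝ) (y : Fin m → ℝ)
    (Z Xm D : Matrix (Fin n) (Fin n) ℝ) (t : ℝ) :
    augLag φ Astar C b σ W y (Z + t • D) Xm
      = augLag φ Astar C b σ W y Z Xm
        + t * (finner D Xm + σ * finner (-(φ W) + Astar y + Z - C) D)
        + t ^ 2 * (σ / 2 * frobSq D) := by
  unfold augLag
  have h1 : -(φ W) + Astar y + (Z + t • D) - C = (-(φ W) + Astar y + Z - C) + t • D := by
    abel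
  rw [h1, frobSq_add, frobSq_smul, finner_add_left, finner_smul_left, finner_smul_right]
  ring

end Shift

/-- Let `{Wᵏ}, {yᵏ}, {Zᵏ}, {Xᵏ}` be generated by the modified 3-block ADMM
(Algorithm 1) for the dual CQSDP problem, and define
`Uᵏ := Xᵏ − σ (φ Xᵏ + C − A* yᵏ⁺¹)`.  Then `Uᵏ⁺¹ = T(Uᵏ)` for every `k ≥ 0`, where
`T(U) = U − Π₊(U) + Π_K (2 Π₊(U) − U − σ(φ(Π₊ U) + C))`,
`Π₊` being the metric projection onto the PSD cone and `Π_K` the metric projection onto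
`K = {X ∈ Sⁿ : A X = b}`. -/
theorem modified_ADMM_is_three_operator_splitting {n m : ℕ}
    (φ : Matrix (Fin n) (Fin n) ℝ →ₗ[ℝ] Matrix (Fin n) (Fin n) ℝ)
    (A : Matrix (Fin n) (Fin n) ℝ →ₗ[ℝ] (Fin m → ℝ))
    (Astar : (Fin m → ℝ) →ₗ[ℝ] Matrix (Fin n) (Fin n) ℝ)
    (C : Matrix (Fin n) (Fin n) ℝ) (b : Fin m → ℝ) (σ : ℝ) (hσ : 0 < σ)
    -- φ : Sⁿ → Sⁿ is self-adjoint positive semidefinite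
    (hφsa : ∀ X Y : Matrix (Fin n) (Fin n) ℝ, finner (φ X) Y = finner X (φ Y))
    (hφpsd : ∀ X : Matrix (Fin n) (Fin n) ℝ, 0 ≤ finner X (φ X))
    (hφsymm : ∀ X : Matrix (Fin n) (Fin n) ℝ, X.IsSymm → (φ X).IsSymm)
    -- A : Sⁿ → ℝᵐ is surjective with adjoint A* : ℝᵐ → Sⁿ
    (hA : Function.Surjective A)
    (hadj : ∀ (X : Matrix (Fin n) (Fin n) ℝ) (y : Fin m → ℝ), A X ⬝ᵥ y = finner X (Astar y))
    (hAstarSymm : ∀ y : Fin m → ℝ, (Astar y).IsSymm)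
    (hC : C.IsSymm)
    -- Π₊ is the metric projection onto the PSD cone S₊ⁿ
    (PiPSD : Matrix (Fin n) (Fin n) ℝ → Matrix (Fin n) (Fin n) ℝ)
    (hPiPSD : ∀ U : Matrix (Fin n) (Fin n) ℝ, (PiPSD U).PosSemidef ∧
      ∀ V : Matrix (Fin n) (Fin n) ℝ, V.PosSemidef → frobSq (U - PiPSD U) ≤ frobSq (U - V))
    -- Π_K is the metric projection onto K = {X ∈ Sⁿ : A X = b}
    (PiAff : Matrix (Fin n) (Fin n) ℝ → Matrix (Fin n) (Fin n) ℝ)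
    (hPiAff : ∀ U : Matrix (Fin n) (Fin n) ℝ, ((PiAff U).IsSymm ∧ A (PiAff U) = b) ∧
      ∀ V : Matrix (Fin n) (Fin n) ℝ, V.IsSymm → A V = b → frobSq (U - PiAff U) ≤ frobSq (U - V))
    -- the iterates of Algorithm 1
    (W Z X : ℕ → Matrix (Fin n) (Fin n) ℝ) (y : ℕ → Fin m → ℝ)
    (hZ0 : (Z 0).PosSemidef) (hX0 : (X 0).IsSymm)
    (hW : ∀ k, W (k + 1) = X k)
    (hy : ∀ k, ∀ y' : Fin m → ℝ,
      augLag φ Astar C b σ (W (k + 1)) (y (k + 1)) (Z k) (X k) ≤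
        augLag φ Astar C b σ (W (k + 1)) y' (Z k) (X k))
    (hZstep : ∀ k, (Z (k + 1)).PosSemidef ∧
      ∀ Z' : Matrix (Fin n) (Fin n) ℝ, Z'.PosSemidef →
        augLag φ Astar C b σ (W (k + 1)) (y (k + 1)) (Z (k + 1)) (X k) ≤
          augLag φ Astar C b σ (W (k + 1)) (y (k + 1)) Z' (X k))
    (hX : ∀ k, X (k + 1) = X k + σ • (Astar (y (k + 1)) + Z (k + 1) - φ (W (k + 1)) - C))
    -- the sequence Uᵏ
    (U : ℕ → Matrix (Fin n) (Fin n) ℝ)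
    (hU : ∀ k, U k = X k - σ • (φ (X k) + C - Astar (y (k + 1)))) :
    ∀ k, U (k + 1) =
      U k - PiPSD (U k) + PiAff ((2 : ℝ) • PiPSD (U k) - U k - σ • (φ (PiPSD (U k)) + C)) := by
  -- symmetry of the iterates
  have hsymmXZ : ∀ j, (X j).IsSymm ∧ (Z j).PosSemidef := by
    intro j
    induction j with
    | zero => exact ⟨hX0, hZ0⟩
    | succ j ih =>
      refine ⟨?_, (hZstep j).1⟩
      rw [hX j, hW j]
      exact ih.1.add (Matrix.IsSymm.smul ((((hAstarSymm _).add
        (isSymm_of_herm (hZstep j).1.1)).sub (hφsymm _ ih.1)).sub hC) σ)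
  have hUsymm : ∀ j, (U j).IsSymm := by
    intro j
    rw [hU j]
    exact (hsymmXZ j).1.sub
      ((((hφsymm _ (hsymmXZ j).1).add hC).sub (hAstarSymm _)).smul σ)
  -- the y-step optimality condition, as a linear equation
  have hyeq : ∀ j, A (X j)
      + σ • A (-(φ (X j)) + Astar (y (j + 1)) + Z j - C) = b := by
    intro j
    have hzero : ∀ e : Fin m → ℝ,
        -(b ⬝ᵥ e) + finner (Astar e) (X j)
          + σ * finner (-(φ (X j)) + Astar (y (j + 1)) + Z j - C) (Astar e) = 0 := by
      intro e
      apply linear_coeff_zero (a := σ / 2 * frobSq (Astar e))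
        (mul_nonneg (by linarith) (frobSq_nonneg _))
      intro t
      have h1 := hy j (y (j + 1) + t • e)
      rw [hW j, augLag_y_shift] at h1
      linarith
    have hdot : ∀ e : Fin m → ℝ,
        (A (X j) + σ • A (-(φ (X j)) + Astar (y (j + 1)) + Z j - C) - b) ⬝ᵥ e = 0 := by
      intro e
      have h0 := hzero e
      rw [sub_dotProduct, add_dotProduct, smul_dotProduct, smul_eq_mul,
        hadj (X j) e, hadj (-(φ (X j)) + Astar (y (j + 1)) + Z j - C) e,
        finner_comm (X j) (Astar e)]
      linarith
    have hv := dotProduct_self_eq_zero.mp (hdot _)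
    rwa [sub_eq_zero] at hv
  intro k
  set P := PiPSD (U k) with hPdef
  have hPpsd := (hPiPSD (U k)).1
  -- variational inequality for the PSD projection of U k
  have hPVI : ∀ V : Matrix (Fin n) (Fin n) ℝ, V.PosSemidef →
      finner (U k - P) (V - P) ≤ 0 := by
    intro V hV
    have key : 0 ≤ -(2 * finner (U k - P) (V - P)) := by
      apply nonneg_coeff (a := frobSq (V - P)) (frobSq_nonneg _)
      intro t ht0 ht1
      have hVt : (P + t • (V - P)).PosSemidef := by
        have hcomb : P + t • (V - P) = (1 - t) • P + t • V := by module
        rw [hcomb]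
        exact (psd_smul (by linarith) hPpsd).add (psd_smul ht0.le hV)
      have h1 := (hPiPSD (U k)).2 _ hVt
      have hsplit : U k - (P + t • (V - P)) = (U k - P) + t • -(V - P) := by module
      rw [hsplit, frobSq_add, frobSq_smul, finner_smul_right, finner_neg_right, frobSq_neg]
        at h1
      linarith
    linarith
  have hUP_P : finner (U k - P) P = 0 := by
    have h0 := hPVI 0 Matrix.PosSemidef.zero
    have h2 := hPVI ((2 : ℝ) • P) (psd_smul (by norm_num) hPpsd)
    rw [zero_sub, finner_neg_right] at h0
    rw [show (2 : ℝ) • P - P = P by module] at h2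
    linarith
  have hUP_V : ∀ V : Matrix (Fin n) (Fin n) ℝ, V.PosSemidef → finner (U k - P) V ≤ 0 := by
    intro V hV
    have h := hPVI (V + P) (hV.add hPpsd)
    rwa [add_sub_cancel_right] at h
  -- the candidate Z-value
  set Q : Matrix (Fin n) (Fin n) ℝ := σ⁻¹ • (P - U k) with hQdef
  clear_value Q
  have hQpsd : Q.PosSemidef := by
    rw [hQdef]
    apply psd_smul (inv_nonneg.mpr hσ.le)
    apply psd_of_dual ((isSymm_of_herm hPpsd.1).sub (hUsymm k))
    intro V hV
    rw [show P - U k = -(U k - P) from (neg_sub _ _).symm, finner_neg_left]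
    linarith [hUP_V V hV]
  have hUQ : U k + σ • Q = P := by
    rw [hQdef, smul_smul, mul_inv_cancel₀ (ne_of_gt hσ), one_smul]
    abel
  -- variational inequality satisfied by Z (k+1)
  have hZVI : ∀ V : Matrix (Fin n) (Fin n) ℝ, V.PosSemidef →
      0 ≤ finner (V - Z (k + 1)) (U k + σ • Z (k + 1)) := by
    intro V hV
    have key : 0 ≤ finner (V - Z (k + 1)) (X k)
        + σ * finner (-(φ (X k)) + Astar (y (k + 1)) + Z (k + 1) - C) (V - Z (k + 1)) := by
      apply nonneg_coeff (a := σ / 2 * frobSq (V - Z (k + 1)))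
        (mul_nonneg (by linarith) (frobSq_nonneg _))
      intro t ht0 ht1
      have hVt : (Z (k + 1) + t • (V - Z (k + 1))).PosSemidef := by
        have hcomb : Z (k + 1) + t • (V - Z (k + 1))
            = (1 - t) • Z (k + 1) + t • V := by module
        rw [hcomb]
        exact (psd_smul (by linarith) (hZstep k).1).add (psd_smul ht0.le hV)
      have h1 := (hZstep k).2 _ hVt
      rw [hW k, augLag_Z_shift] at h1
      linarith
    have hconv : finner (V - Z (k + 1)) (X k)
        + σ * finner (-(φ (X k)) + Astar (y (k + 1)) + Z (k + 1) - C) (V - Z (k + 1))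
        = finner (V - Z (k + 1)) (U k + σ • Z (k + 1)) := by
      rw [hU k, finner_comm (-(φ (X k)) + Astar (y (k + 1)) + Z (k + 1) - C)]
      simp only [finner_add_right, finner_sub_right, finner_neg_right, finner_smul_right]
      ring
    linarith [key, hconv]
  -- the variational inequality for Q
  have hQVI : ∀ V : Matrix (Fin n) (Fin n) ℝ, V.PosSemidef →
      0 ≤ finner (V - Q) (U k + σ • Q) := by
    intro V hV
    rw [hUQ, finner_sub_left]
    have h1 : 0 ≤ finner V P := finner_psd_nonneg hV hPpsd
    have h2 : finner Q P = 0 := by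
      rw [hQdef, finner_smul_left,
        show P - U k = -(U k - P) from (neg_sub _ _).symm, finner_neg_left, hUP_P]
      ring
    linarith
  -- identification of Z (k+1)
  have hZQ : Z (k + 1) = Q := by
    have h1 := hZVI Q hQpsd
    have h2 := hQVI (Z (k + 1)) (hZstep k).1
    have h3 : finner (Z (k + 1) - Q) (U k + σ • Q)
        = -finner (Q - Z (k + 1)) (U k + σ • Q) := by
      rw [show Z (k + 1) - Q = -(Q - Z (k + 1)) from (neg_sub _ _).symm, finner_neg_left]
    have h4 : finner (Q - Z (k + 1)) (U k + σ • Z (k + 1))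
        - finner (Q - Z (k + 1)) (U k + σ • Q) = -(σ * frobSq (Q - Z (k + 1))) := by
      rw [← finner_sub_right,
        show (U k + σ • Z (k + 1)) - (U k + σ • Q) = σ • (Z (k + 1) - Q) by module,
        finner_smul_right,
        show Z (k + 1) - Q = -(Q - Z (k + 1)) from (neg_sub _ _).symm, finner_neg_right,
        frobSq_eq_finner]
      ring
    have h5 : frobSq (Q - Z (k + 1)) ≤ 0 := by nlinarith [h1, h2, h3, h4, hσ]
    have h6 := frobSq_eq_zero h5
    exact (sub_eq_zero.mp h6).symm
  -- the X-update lands on the projection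
  have hXk1 : X (k + 1) = P := by
    rw [hX k, hW k, hZQ]
    have hstep : X k + σ • (Astar (y (k + 1)) + Q - φ (X k) - C)
        = (X k - σ • (φ (X k) + C - Astar (y (k + 1)))) + σ • Q := by module
    rw [hstep, ← hU k]
    exact hUQ
  -- the y-step at k+1 identifies the affine projection
  have hyk1 := hyeq (k + 1)
  rw [hXk1, hZQ] at hyk1
  have hfeas : A (((2 : ℝ) • P - U k - σ • (φ P + C)) + σ • Astar (y (k + 1 + 1))) = b := by
    have hsQ : σ • Q = P - U k := by
      rw [← hUQ]; abel
    have harg : ((2 : ℝ) • P - U k - σ • (φ P + C)) + σ • Astar (y (k + 1 + 1))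
        = P + σ • (-(φ P) + Astar (y (k + 1 + 1)) + Q - C) := by
      have hexp : P + σ • (-(φ P) + Astar (y (k + 1 + 1)) + Q - C)
          = ((2 : ℝ) • P - U k - σ • (φ P + C)) + σ • Astar (y (k + 1 + 1))
            + (σ • Q - (P - U k)) := by module
      rw [hexp, hsQ, sub_self, add_zero]
    rw [harg, map_add, map_smul]
    exact hyk1
  set G : Matrix (Fin n) (Fin n) ℝ := (2 : ℝ) • P - U k - σ • (φ P + C) with hGdef
  have hPiAffG : PiAff G = G + σ • Astar (y (k + 1 + 1)) := by
    set S : Matrix (Fin n) (Fin n) ℝ := G + σ • Astar (y (k + 1 + 1)) with hS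
    have hGsymm : G.IsSymm := by
      rw [hGdef]
      exact (((isSymm_of_herm hPpsd.1).smul (2 : ℝ)).sub (hUsymm k)).sub
        (((hφsymm _ (isSymm_of_herm hPpsd.1)).add hC).smul σ)
    have hSsymm : S.IsSymm := hGsymm.add ((hAstarSymm _).smul σ)
    have hmin := (hPiAff G).2 S hSsymm hfeas
    have hfacts := (hPiAff G).1
    have hcross : finner (G - S) (S - PiAff G) = 0 := by
      have hGS : G - S = (-σ) • Astar (y (k + 1 + 1)) := by rw [hS]; module
      rw [hGS, finner_smul_left, finner_comm, ← hadj, map_sub, hfeas, hfacts.2, sub_self,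
        zero_dotProduct, mul_zero]
    have hexp : frobSq (G - PiAff G)
        = frobSq (G - S) + 2 * finner (G - S) (S - PiAff G) + frobSq (S - PiAff G) := by
      rw [show G - PiAff G = (G - S) + (S - PiAff G) by abel, frobSq_add]
    have hle : frobSq (S - PiAff G) ≤ 0 := by
      rw [hexp, hcross] at hmin
      linarith
    exact (sub_eq_zero.mp (frobSq_eq_zero hle)).symm
  -- conclude
  rw [hU (k + 1), hXk1, hPiAffG, hGdef]
  module
end

section
/- Let X be a finite-dimensional real inner product space, θ: X → (−∞, ∞] a proper, lower semicontinuous, convex function with Fenchel conjugate θ*(ξ) = sup_z {⟨ξ, z⟩ − θ(z)}, and let σ > 0 and x, v ∈ X. Suppose z̄ minimizes z ↦ θ(−z) + ⟨z, x⟩ + (σ/2)‖v + z‖², and set x̄ := x + σ(v + z̄) and u := x̄ − σ z̄. Then x̄ is the unique minimizer of the function ξ ↦ θ*(ξ) + (1/(2σ))‖ξ − u‖². -/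
open scoped RealInnerProductSpace

/-- The Fenchel conjugate `θ*(ξ) = sup_z {⟪ξ, z⟫ − θ(z)}` of an extended-real-valued
function `θ`. -/
noncomputable def fenchelConj {X : Type*} [NormedAddCommGroup X] [InnerProductSpace ℝ X]
    (θ : X → EReal) (ξ : X) : EReal :=
  ⨆ z : X, ((⟪ξ, z⟫ : ℝ) : EReal) - θ z

private lemma quadA {X : Type*} [NormedAddCommGroup X] [InnerProductSpace ℝ X]
    (σ t : ℝ) (x v zbar d : X) :
    ⟪zbar - t • d, x⟫ + σ / 2 * ‖v + (zbar - t • d)‖ ^ 2 =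
      (⟪zbar, x⟫ + σ / 2 * ‖v + zbar‖ ^ 2) - t * ⟪d, x + σ • (v + zbar)⟫
        + t ^ 2 * (σ / 2) * ‖d‖ ^ 2 := by
  have h : v + (zbar - t • d) = (v + zbar) - t • d := by abel
  rw [h, norm_sub_sq_real]
  simp [inner_sub_left, inner_add_right, inner_smul_left, inner_smul_right, norm_smul,
    real_inner_comm d x, real_inner_comm d (v + zbar), mul_pow]
  ring

private lemma quadB {X : Type*} [NormedAddCommGroup X] [InnerProductSpace ℝ X]
    (σ : ℝ) (hσ : 0 < σ) (u zbar ξ : X) :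
    ⟪ξ, -zbar⟫ + 1 / (2 * σ) * ‖ξ - u‖ ^ 2 =
      (⟪u + σ • zbar, -zbar⟫ + 1 / (2 * σ) * ‖(u + σ • zbar) - u‖ ^ 2)
        + 1 / (2 * σ) * ‖ξ - (u + σ • zbar)‖ ^ 2 := by
  have h : ξ - (u + σ • zbar) = (ξ - u) - σ • zbar := by abel
  have h2 : (u + σ • zbar) - u = σ • zbar := by abel
  rw [h, h2, norm_sub_sq_real (ξ - u)]
  simp [inner_add_left, inner_smul_left, inner_smul_right, inner_neg_right, norm_smul,
    real_inner_comm zbar u, mul_pow, inner_sub_left, real_inner_self_eq_norm_sq]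
  field_simp
  ring

private lemma small_t (c r C : ℝ) (hC : 0 ≤ C)
    (h : ∀ t : ℝ, 0 < t → t < 1 → c ≤ r + t * C) : c ≤ r := by
  refine le_of_forall_pos_le_add fun ε hε => ?_
  have hden : (0 : ℝ) < C + 1 := by linarith
  have ht0 : 0 < min (1/2) (ε / (C + 1)) := by
    exact lt_min (by norm_num) (div_pos hε hden)
  have ht1 : min (1/2) (ε / (C + 1)) < 1 := lt_of_le_of_lt (min_le_left _ _) (by norm_num)
  have := h _ ht0 ht1
  have hle : min (1/2) (ε / (C + 1)) ≤ ε / (C + 1) := min_le_right _ _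
  have : min (1/2) (ε / (C + 1)) * C ≤ ε := by
    calc min (1/2) (ε / (C + 1)) * C ≤ (ε / (C + 1)) * C :=
          mul_le_mul_of_nonneg_right hle hC
      _ ≤ ε := by rw [div_mul_eq_mul_div, div_le_iff₀ hden]; nlinarith
  linarith

/-- Let `θ : X → (−∞, ∞]` be a proper, lower semicontinuous, convex
function on a finite-dimensional real inner product space, `σ > 0` and `x, v ∈ X`.
If `z̄` minimizes `z ↦ θ(−z) + ⟪z, x⟫ + (σ/2) ‖v + z‖²`, and `x̄ := x + σ (v + z̄)`,
`u := x̄ − σ z̄`, then `x̄` is the unique minimizer of `ξ ↦ θ*(ξ) + (1/(2σ)) ‖ξ − u‖²`. -/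
theorem minimizer_gives_resolvent_of_conjugate
    {X : Type*} [NormedAddCommGroup X] [InnerProductSpace ℝ X] [FiniteDimensional ℝ X]
    (θ : X → EReal)
    (hproper_top : ∃ z : X, θ z ≠ ⊤) (hproper_bot : ∀ z : X, θ z ≠ ⊥)
    (hlsc : LowerSemicontinuous θ)
    (hconv : ∀ z w : X, ∀ t : ℝ, 0 < t → t < 1 →
      θ (t • z + (1 - t) • w) ≤ (t : EReal) * θ z + ((1 - t : ℝ) : EReal) * θ w)
    (σ : ℝ) (hσ : 0 < σ) (x v zbar : X)
    (hmin : ∀ z : X,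
      θ (-zbar) + ((⟪zbar, x⟫ + σ / 2 * ‖v + zbar‖ ^ 2 : ℝ) : EReal) ≤
        θ (-z) + ((⟪z, x⟫ + σ / 2 * ‖v + z‖ ^ 2 : ℝ) : EReal))
    (xbar u : X) (hxbar : xbar = x + σ • (v + zbar)) (hu : u = xbar - σ • zbar) :
    (∀ ξ : X,
        fenchelConj θ xbar + ((1 / (2 * σ) * ‖xbar - u‖ ^ 2 : ℝ) : EReal) ≤
          fenchelConj θ ξ + ((1 / (2 * σ) * ‖ξ - u‖ ^ 2 : ℝ) : EReal)) ∧
      ∀ ξ : X,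
        (∀ ξ' : X,
            fenchelConj θ ξ + ((1 / (2 * σ) * ‖ξ - u‖ ^ 2 : ℝ) : EReal) ≤
              fenchelConj θ ξ' + ((1 / (2 * σ) * ‖ξ' - u‖ ^ 2 : ℝ) : EReal)) →
          ξ = xbar := by
  have hxu : xbar = u + σ • zbar := by rw [hu]; abel
  -- θ(-zbar) is finite
  obtain ⟨z₀, hz₀⟩ := hproper_top
  set r₀ := (θ z₀).toReal with hr₀def
  have hr₀ : (r₀ : EReal) = θ z₀ := EReal.coe_toReal hz₀ (hproper_bot z₀)
  have htop : θ (-zbar) ≠ ⊤ := by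
    intro h
    have h0 := hmin (-z₀)
    rw [neg_neg, h, ← hr₀, EReal.top_add_coe, ← EReal.coe_add] at h0
    exact EReal.coe_ne_top _ (top_le_iff.mp h0)
  set a := (θ (-zbar)).toReal with hadef
  have ha : (a : EReal) = θ (-zbar) := EReal.coe_toReal htop (hproper_bot _)
  -- key subgradient inequality
  have hkey : ∀ w : X, ((a + ⟪xbar, w + zbar⟫ : ℝ) : EReal) ≤ θ w := by
    intro w
    rcases eq_or_ne (θ w) ⊤ with hw | hw
    · rw [hw]; exact le_top
    have hwr : ((θ w).toReal : EReal) = θ w := EReal.coe_toReal hw (hproper_bot w)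
    set r := (θ w).toReal with hrdef
    rw [← hwr, EReal.coe_le_coe_iff]
    refine small_t _ _ (σ / 2 * ‖w + zbar‖ ^ 2) (by positivity) fun t ht ht1 => ?_
    set d := w + zbar with hd
    have hzt : -(zbar - t • d) = t • w + (1 - t) • (-zbar) := by
      rw [hd]; module
    have hcv := hconv w (-zbar) t ht ht1
    rw [← hzt] at hcv
    have hmn := hmin (zbar - t • d)
    have hchain : θ (-zbar) + ((⟪zbar, x⟫ + σ / 2 * ‖v + zbar‖ ^ 2 : ℝ) : EReal) ≤
        (t : EReal) * θ w + ((1 - t : ℝ) : EReal) * θ (-zbar) +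
          ((⟪zbar - t • d, x⟫ + σ / 2 * ‖v + (zbar - t • d)‖ ^ 2 : ℝ) : EReal) :=
      le_trans hmn (add_le_add_left hcv _)
    rw [← ha, ← hwr, ← EReal.coe_mul, ← EReal.coe_mul, ← EReal.coe_add, ← EReal.coe_add,
      ← EReal.coe_add, EReal.coe_le_coe_iff] at hchain
    rw [quadA σ t x v zbar d, ← hxbar] at hchain
    have hdx : ⟪d, xbar⟫ = ⟪xbar, d⟫ := real_inner_comm xbar d
    have h2 : t * (a + ⟪xbar, d⟫) ≤ t * (r + t * (σ / 2 * ‖d‖ ^ 2)) := by nlinarith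
    exact (mul_le_mul_iff_of_pos_left ht).mp h2
  -- value of the conjugate at xbar
  have hconj_le : fenchelConj θ xbar ≤ ((-⟪xbar, zbar⟫ - a : ℝ) : EReal) := by
    refine iSup_le fun w => ?_
    have h1 : ((⟪xbar, w⟫ : ℝ) : EReal) - θ w ≤
        ((⟪xbar, w⟫ : ℝ) : EReal) - ((a + ⟪xbar, w + zbar⟫ : ℝ) : EReal) :=
      EReal.sub_le_sub (le_refl _) (hkey w)
    refine le_trans h1 ?_
    rw [← EReal.coe_sub, EReal.coe_le_coe_iff, inner_add_right]
    ring_nf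
    exact le_refl _
  have hconj_ge : ∀ ξ : X, ((⟪ξ, -zbar⟫ - a : ℝ) : EReal) ≤ fenchelConj θ ξ := by
    intro ξ
    refine le_iSup_of_le (-zbar) ?_
    rw [← ha, ← EReal.coe_sub]
  have hconj_xbar : fenchelConj θ xbar = ((-⟪xbar, zbar⟫ - a : ℝ) : EReal) := by
    refine le_antisymm hconj_le ?_
    have := hconj_ge xbar
    rwa [inner_neg_right] at this
  set M : ℝ := -⟪xbar, zbar⟫ - a + 1 / (2 * σ) * ‖xbar - u‖ ^ 2 with hM
  have hobj_xbar : fenchelConj θ xbar + ((1 / (2 * σ) * ‖xbar - u‖ ^ 2 : ℝ) : EReal)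
      = ((M : ℝ) : EReal) := by
    rw [hconj_xbar, ← EReal.coe_add]
  have hmain : ∀ ξ : X, ((M + 1 / (2 * σ) * ‖ξ - xbar‖ ^ 2 : ℝ) : EReal) ≤
      fenchelConj θ ξ + ((1 / (2 * σ) * ‖ξ - u‖ ^ 2 : ℝ) : EReal) := by
    intro ξ
    have h1 : ((⟪ξ, -zbar⟫ - a : ℝ) : EReal) + ((1 / (2 * σ) * ‖ξ - u‖ ^ 2 : ℝ) : EReal) ≤
        fenchelConj θ ξ + ((1 / (2 * σ) * ‖ξ - u‖ ^ 2 : ℝ) : EReal) :=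
      add_le_add_left (hconj_ge ξ) _
    refine le_trans ?_ h1
    rw [← EReal.coe_add, EReal.coe_le_coe_iff]
    have hq := quadB σ hσ u zbar ξ
    rw [← hxu] at hq
    simp only [inner_neg_right] at hq ⊢
    rw [hM]
    linarith [hq.le]
  constructor
  · intro ξ
    rw [hobj_xbar]
    refine le_trans ?_ (hmain ξ)
    rw [EReal.coe_le_coe_iff]
    have : 0 ≤ 1 / (2 * σ) * ‖ξ - xbar‖ ^ 2 := by positivity
    linarith
  · intro ξ hξ
    have h1 := hξ xbar
    rw [hobj_xbar] at h1
    have h2 := le_trans (hmain ξ) h1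
    rw [EReal.coe_le_coe_iff] at h2
    have h3 : ‖ξ - xbar‖ ^ 2 ≤ 0 := by
      have h4 : 0 < 1 / (2 * σ) := by positivity
      nlinarith
    have : ‖ξ - xbar‖ = 0 := by nlinarith [norm_nonneg (ξ - xbar)]
    rwa [norm_eq_zero, sub_eq_zero] at this
end
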